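/- For every integer k ≥ 0 there exists a tree T such that lmw(T) = k and lmw(T²) = k. In other words, the lower bound lmw(T²) ≥ lmw(T) for trees is tight for every value k of the linear MIM-width. -/

import Mathlib

open scoped Classical

noncomputable section

namespace LMW

variable {V : Type*} [Fintype V]

/-- The bipartite graph `G[Vᵢ, V̄ᵢ]` consisting of the edges of `G` crossing the cut at
position `i` of the linear layout `σ` (here `Vᵢ` is the set of the first `i` vertices
in the layout). -/
def cutGraph (G : SimpleGraph V) (σ : V ≃ Fin (Fintype.card V)) (i : ℕ) : SimpleGraph V where
  Adj u v := G.Adj u v ∧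
    (((σ u : ℕ) < i ∧ i ≤ (σ v : ℕ)) ∨ ((σ v : ℕ) < i ∧ i ≤ (σ u : ℕ)))
  symm := by
    constructor
    intro u v h
    exact ⟨h.1.symm, h.2.symm⟩
  loopless := by
    constructor
    intro u h
    exact G.loopless.irrefl u h.1

/-- `M` is an induced matching in `H`: a set of edges of `H` such that any two distinct
edges of `M` share no endpoint and no endpoint of one is adjacent in `H` to an endpoint
of the other. -/
def IsInducedMatching (H : SimpleGraph V) (M : Finset (Sym2 V)) : Prop :=
  (↑M : Set (Sym2 V)) ⊆ H.edgeSet ∧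
    ∀ e ∈ M, ∀ f ∈ M, e ≠ f → ∀ u ∈ e, ∀ v ∈ f, u ≠ v ∧ ¬ H.Adj u v

/-- `mim H` is the size of a maximum induced matching of `H`. -/
def mim (H : SimpleGraph V) : ℕ :=
  sSup {n : ℕ | ∃ M : Finset (Sym2 V), IsInducedMatching H M ∧ M.card = n}

/-- The MIM-width of `G` under the linear layout `σ`: the maximum over all cuts
`1 ≤ i < |V|` of the size of a maximum induced matching of the cut graph. -/
def mw (G : SimpleGraph V) (σ : V ≃ Fin (Fintype.card V)) : ℕ :=
  (Finset.Ico 1 (Fintype.card V)).sup fun i => mim (cutGraph G σ i)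

/-- The linear MIM-width of `G`: the minimum of `mw G σ` over all linear layouts `σ`. -/
def lmw (G : SimpleGraph V) : ℕ :=
  sInf {m : ℕ | ∃ σ : V ≃ Fin (Fintype.card V), mw G σ = m}

/-- The `m`-th power of a graph: two distinct vertices are adjacent iff their distance
in `G` is at most `m`. -/
def graphPow (G : SimpleGraph V) (m : ℕ) : SimpleGraph V where
  Adj u v := u ≠ v ∧ G.edist u v ≤ m
  symm := by
    constructor
    intro u v h
    refine ⟨h.1.symm, ?_⟩
    rw [SimpleGraph.edist_comm]
    exact h.2
  loopless := by
    constructor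
    intro u h
    exact h.1 rfl

/-!
`tree 0` is the path on three vertices, and `tree (k + 1)` hangs three copies of `tree k` from a
hub placed below a new root. Both `tree k` and its square have linear MIM-width `k + 1`; the
one-vertex tree covers `k = 0`.

Upper bound: in the natural layout each copy is an interval, so a cut crosses at most one copy.
An induced matching of the cut graph therefore consists of edges inside that copy, at most
`k + 1` of them by induction, and at most one further edge, since all other crossing edges
contain the hub or lie in the clique of the square formed by the hub and the roots.

Lower bound: every layout has a cut with an induced matching of size `k + 1` avoiding the root.
For `tree (k + 1)` take such cuts inside the three copies. By pigeonhole one of them has vertices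
of the other copies on both of its sides. Then either another copy is cut, or the two other copies
lie on opposite sides and an edge through the hub (between their roots, in the square) crosses;
either way the new crossing edge is far from the matching and enlarges it.
-/

section Cuts

variable {V W : Type*} {G : SimpleGraph V} {f : V → ℕ} {t : ℕ}

def thresholdCut (G : SimpleGraph V) (f : V → ℕ) (t : ℕ) : SimpleGraph V where
  Adj u v := G.Adj u v ∧ ((f u < t ∧ t ≤ f v) ∨ (f v < t ∧ t ≤ f u))
  symm := ⟨fun _ _ h => ⟨h.1.symm, h.2.symm⟩⟩
  loopless := ⟨fun _ h => G.loopless.irrefl _ h.1⟩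

theorem thresholdCut_adj {u v : V} :
    (thresholdCut G f t).Adj u v ↔ G.Adj u v ∧ ((f u < t ∧ t ≤ f v) ∨ (f v < t ∧ t ≤ f u)) :=
  Iff.rfl

theorem thresholdCut_le : thresholdCut G f t ≤ G :=
  fun _ _ h => h.1

theorem cutGraph_eq_thresholdCut [Fintype V] (σ : V ≃ Fin (Fintype.card V)) (i : ℕ) :
    cutGraph G σ i = thresholdCut G (fun v => σ v) i := by
  ext
  rfl

def thresholdCutEmbedding {H : SimpleGraph W} (φ : G ↪g H) (g : W → ℕ) :
    thresholdCut G (g ∘ φ) t ↪g thresholdCut H g t where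
  toEmbedding := φ.toEmbedding
  map_rel_iff' := by
    intro u v
    simp only [thresholdCut_adj, Function.comp_apply]
    exact and_congr_left fun _ => φ.map_adj_iff

theorem exists_thresholdCut_adj_of_walk :
    ∀ {x y : V}, G.Walk x y → f x < t → t ≤ f y → ∃ a b, (thresholdCut G f t).Adj a b
  | _, _, .nil, hx, hy => absurd hx (not_lt.mpr hy)
  | _, _, .cons (v := z) h p, hx, hy => by
    by_cases hz : t ≤ f z
    · exact ⟨_, _, h, Or.inl ⟨hx, hz⟩⟩
    · exact exists_thresholdCut_adj_of_walk p (not_le.mp hz) hy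

theorem exists_eq_mk_of_mem_edgeSet_thresholdCut {e : Sym2 V}
    (he : e ∈ (thresholdCut G f t).edgeSet) :
    ∃ a b, e = s(a, b) ∧ G.Adj a b ∧ f a < t ∧ t ≤ f b := by
  induction e using Sym2.ind with
  | _ a b =>
    obtain ⟨hab, ⟨ha, hb⟩ | ⟨hb, ha⟩⟩ := he
    exacts [⟨a, b, rfl, hab, ha, hb⟩, ⟨b, a, Sym2.eq_swap, hab.symm, hb, ha⟩]

end Cuts

section Square

variable {V : Type*} {G : SimpleGraph V}

theorem graphPow_two_adj {V : Type*} {G : SimpleGraph V} {x y : V} :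
    (graphPow G 2).Adj x y ↔ x ≠ y ∧ (G.Adj x y ∨ ∃ z, G.Adj x z ∧ G.Adj z y) := by
  refine and_congr_right fun hne => ⟨fun hd => ?_, ?_⟩
  · obtain ⟨w, hw⟩ := SimpleGraph.exists_walk_of_edist_ne_top (ne_top_of_le_ne_top (by simp) hd)
    have hlen : w.length ≤ 2 := by exact_mod_cast hw ▸ hd
    match w, hlen with
    | .nil, _ => exact absurd rfl hne
    | .cons h .nil, _ => exact Or.inl h
    | .cons h (.cons h' .nil), _ => exact Or.inr ⟨_, h, h'⟩
    | .cons _ (.cons _ (.cons _ _)), h => simp at h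
  · rintro (h | ⟨z, h₁, h₂⟩)
    · exact (SimpleGraph.edist_le (.cons h .nil)).trans (by simp)
    · exact (SimpleGraph.edist_le (.cons h₁ (.cons h₂ .nil))).trans (by simp)

theorem le_graphPow_two {V : Type*} (G : SimpleGraph V) : G ≤ graphPow G 2 :=
  fun _ _ h => graphPow_two_adj.mpr ⟨h.ne, Or.inl h⟩

end Square

section Matching

variable {V W : Type*} {G H : SimpleGraph V} {M : Finset (Sym2 V)} {f : V → ℕ} {t : ℕ}

theorem IsInducedMatching.subset (hM : IsInducedMatching H M) {S : Finset (Sym2 V)}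
    (hS : S ⊆ M) : IsInducedMatching H S :=
  ⟨fun _ he => hM.1 (hS he), fun e he f hf => hM.2 e (hS he) f (hS hf)⟩

theorem IsInducedMatching.eq_of_mem_of_mem (hM : IsInducedMatching H M) {e f : Sym2 V}
    (he : e ∈ M) (hf : f ∈ M) {v : V} (hve : v ∈ e) (hvf : v ∈ f) : e = f :=
  by_contra fun hne => (hM.2 e he f hf hne v hve v hvf).1 rfl

theorem IsInducedMatching.insert [DecidableEq V] (hM : IsInducedMatching H M) {a b : V}
    (hab : H.Adj a b)
    (hfar : ∀ e ∈ M, ∀ u ∈ e, u ≠ a ∧ u ≠ b ∧ ¬ H.Adj a u ∧ ¬ H.Adj b u) :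
    IsInducedMatching H (insert s(a, b) M) := by
  refine ⟨?_, ?_⟩
  · intro e he
    rcases Finset.mem_insert.mp he with rfl | he
    exacts [hab, hM.1 he]
  · have key : ∀ e ∈ M, ∀ u ∈ s(a, b), ∀ v ∈ e, u ≠ v ∧ ¬ H.Adj u v := by
      intro e he u hu v hv
      obtain ⟨hva, hvb, hav, hbv⟩ := hfar e he v hv
      rcases Sym2.mem_iff.mp hu with rfl | rfl
      exacts [⟨hva.symm, hav⟩, ⟨hvb.symm, hbv⟩]
    intro e he f hf hef u hu v hv
    rcases Finset.mem_insert.mp he with rfl | he <;> rcases Finset.mem_insert.mp hf with rfl | hf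
    · exact absurd rfl hef
    · exact key f hf u hu v hv
    · obtain ⟨hne, hnadj⟩ := key e he v hv u hu
      exact ⟨hne.symm, fun h => hnadj h.symm⟩
    · exact hM.2 e he f hf hef u hu v hv

theorem IsInducedMatching.image [DecidableEq W] {H' : SimpleGraph W} (φ : H ↪g H')
    (hM : IsInducedMatching H M) : IsInducedMatching H' (M.image (Sym2.map φ)) := by
  refine ⟨?_, ?_⟩
  · intro e he
    obtain ⟨e, heM, rfl⟩ := Finset.mem_image.mp he
    induction e using Sym2.ind with
    | _ a b => exact φ.map_adj_iff.mpr ((SimpleGraph.mem_edgeSet _).mp (hM.1 heM))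
  · intro e he f hf hef u hu v hv
    obtain ⟨e, heM, rfl⟩ := Finset.mem_image.mp he
    obtain ⟨f, hfM, rfl⟩ := Finset.mem_image.mp hf
    obtain ⟨a, ha, rfl⟩ := Sym2.mem_map.mp hu
    obtain ⟨b, hb, rfl⟩ := Sym2.mem_map.mp hv
    obtain ⟨hne, hnadj⟩ := hM.2 e heM f hfM (fun h => hef (h ▸ rfl)) a ha b hb
    exact ⟨φ.injective.ne hne, fun h => hnadj (φ.map_adj_iff.mp h)⟩

theorem IsInducedMatching.preimage {H' : SimpleGraph W} (φ : H ↪g H')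
    {M : Finset (Sym2 W)} (hM : IsInducedMatching H' M) :
    IsInducedMatching H (M.preimage (Sym2.map φ) (Sym2.map.injective φ.injective).injOn) := by
  refine ⟨fun e he => ?_, fun e he f hf hef u hu v hv => ?_⟩
  · have he' := hM.1 (Finset.mem_preimage.mp he)
    induction e using Sym2.ind with
    | _ a b => exact φ.map_adj_iff.mp he'
  · rw [Finset.mem_preimage] at he hf
    have hef' : Sym2.map φ e ≠ Sym2.map φ f := (Sym2.map.injective φ.injective).ne hef
    obtain ⟨hne, hnadj⟩ :=
      hM.2 _ he _ hf hef' (φ u) (Sym2.mem_map.mpr ⟨u, hu, rfl⟩) (φ v)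
        (Sym2.mem_map.mpr ⟨v, hv, rfl⟩)
    exact ⟨fun h => hne (h ▸ rfl), fun h => hnadj (φ.map_adj_iff.mpr h)⟩

theorem card_preimage_sym2Map (φ : V ↪ W) {M : Finset (Sym2 W)}
    (hM : ∀ e ∈ M, ∀ w ∈ e, w ∈ Set.range φ) :
    (M.preimage (Sym2.map φ) (Sym2.map.injective φ.injective).injOn).card = M.card := by
  rw [Finset.card_preimage, Finset.filter_true_of_mem]
  intro e he
  induction e using Sym2.ind with
  | _ a b =>
    obtain ⟨a, rfl⟩ := hM _ he a (Sym2.mem_mk_left a b)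
    obtain ⟨b, rfl⟩ := hM _ he b (Sym2.mem_mk_right _ b)
    exact ⟨s(a, b), rfl⟩

theorem IsInducedMatching.two_mul_card_le [Fintype V] (hM : IsInducedMatching H M) :
    2 * M.card ≤ Fintype.card V := by
  have hdisj : (M : Set (Sym2 V)).PairwiseDisjoint Sym2.toFinset := by
    intro e he f hf hef
    refine Finset.disjoint_left.mpr fun u hu hu' => ?_
    exact (hM.2 e he f hf hef u (Sym2.mem_toFinset.mp hu) u (Sym2.mem_toFinset.mp hu')).1 rfl
  calc 2 * M.card = ∑ e ∈ M, e.toFinset.card := by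
        rw [Finset.sum_congr rfl fun e he =>
          Sym2.card_toFinset_of_not_isDiag e (H.not_isDiag_of_mem_edgeSet (hM.1 he))]
        simp [mul_comm]
    _ = (M.biUnion Sym2.toFinset).card := (Finset.card_biUnion hdisj).symm
    _ ≤ Fintype.card V := Finset.card_le_univ _

/-- `e'` crosses the cut, so `v` is adjacent in the cut graph to one of its endpoints. -/
theorem IsInducedMatching.eq_of_forall_adj (hM : IsInducedMatching (thresholdCut G f t) M)
    {e e' : Sym2 V} (he : e ∈ M) (he' : e' ∈ M) {v : V} (hv : v ∈ e)
    (hadj : ∀ u ∈ e', G.Adj v u) : e = e' := by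
  by_contra hne
  obtain ⟨a, b, rfl, -, ha, hb⟩ := exists_eq_mk_of_mem_edgeSet_thresholdCut (hM.1 he')
  by_cases hvt : f v < t
  · exact (hM.2 _ he _ he' hne v hv b (Sym2.mem_mk_right a b)).2
      ⟨hadj b (Sym2.mem_mk_right a b), Or.inl ⟨hvt, hb⟩⟩
  · exact (hM.2 _ he _ he' hne v hv a (Sym2.mem_mk_left a b)).2
      ⟨hadj a (Sym2.mem_mk_left a b), Or.inr ⟨ha, not_lt.mp hvt⟩⟩

theorem card_le_of_filter_le {α : Type*} {s : Finset α} (p : α → Prop) [DecidablePred p] {m n : ℕ}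
    (h₁ : (s.filter p).card ≤ m) (h₂ : (s.filter fun a => ¬ p a).card ≤ n) : s.card ≤ m + n := by
  rw [← Finset.card_filter_add_card_filter_not p]
  omega

end Matching

section Obstruction

variable {V : Type*} {G H : SimpleGraph V} {k : ℕ}

theorem mim_le (h : ∀ M, IsInducedMatching H M → M.card ≤ k) : mim H ≤ k :=
  csSup_le ⟨0, ∅, ⟨by simp, by simp⟩, rfl⟩ (by rintro _ ⟨M, hM, rfl⟩; exact h M hM)

/-- Rankings stand in for layouts because they restrict to subgraphs. Avoiding `r` lets the
matching be enlarged once the graph hangs from `r` inside a bigger tree. -/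
def IsCutObstruction (G : SimpleGraph V) (r : V) (k : ℕ) : Prop :=
  ∀ f : V → ℕ, Function.Injective f → ∃ t, ∃ M : Finset (Sym2 V),
    IsInducedMatching (thresholdCut G f t) M ∧ M.card = k ∧ ∀ e ∈ M, r ∉ e

theorem isCutObstruction_of_adj {r a b : V} (hab : G.Adj a b)
    (ha : a ≠ r) (hb : b ≠ r) : IsCutObstruction G r 1 := by
  intro f hf
  have key : ∀ {u v}, G.Adj u v → u ≠ r → v ≠ r → f u < f v → ∃ t, ∃ M : Finset (Sym2 V),
      IsInducedMatching (thresholdCut G f t) M ∧ M.card = 1 ∧ ∀ e ∈ M, r ∉ e := by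
    intro u v huv hu hv hlt
    refine ⟨f v, {s(u, v)}, ⟨?_, ?_⟩, rfl, ?_⟩
    · simpa using ⟨huv, Or.inl ⟨hlt, le_rfl⟩⟩
    · simp
    · simp [Sym2.mem_iff, hu.symm, hv.symm]
  rcases lt_or_gt_of_ne (hf.ne hab.ne) with h | h
  exacts [key hab ha hb h, key hab.symm hb ha h]

end Obstruction

section Width

variable {V : Type*} [Fintype V] {G H : SimpleGraph V} {M : Finset (Sym2 V)} {k : ℕ}

theorem IsInducedMatching.card_le_mim (hM : IsInducedMatching H M) : M.card ≤ mim H :=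
  le_csSup ⟨Fintype.card (Sym2 V), by rintro _ ⟨M', -, rfl⟩; exact M'.card_le_univ⟩ ⟨M, hM, rfl⟩

theorem mw_le_of_forall_thresholdCut {σ : V ≃ Fin (Fintype.card V)}
    (h : ∀ t M, IsInducedMatching (thresholdCut G (fun v => σ v) t) M → M.card ≤ k) :
    mw G σ ≤ k :=
  Finset.sup_le fun i _ => mim_le (cutGraph_eq_thresholdCut σ i ▸ h i)

theorem lmw_eq_of_mw_le_of_forall_le {σ : V ≃ Fin (Fintype.card V)} (hσ : mw G σ ≤ k)
    (h : ∀ σ, k ≤ mw G σ) : lmw G = k :=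
  le_antisymm (Nat.sInf_le ⟨σ, le_antisymm hσ (h σ)⟩) (le_csInf ⟨_, σ, rfl⟩ (by
    rintro _ ⟨σ, rfl⟩
    exact h σ))

theorem IsCutObstruction.le_mw {r : V} (h : IsCutObstruction G r k)
    (σ : V ≃ Fin (Fintype.card V)) : k ≤ mw G σ := by
  obtain ⟨t, M, hM, rfl, -⟩ := h (fun v => σ v) (Fin.val_injective.comp σ.injective)
  obtain rfl | ⟨e, he⟩ := M.eq_empty_or_nonempty
  · exact Nat.zero_le _
  obtain ⟨a, b, -, -, ha, hb⟩ := exists_eq_mk_of_mem_edgeSet_thresholdCut (hM.1 he)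
  have ht : t ∈ Finset.Ico 1 (Fintype.card V) := Finset.mem_Ico.mpr ⟨by omega, by omega⟩
  calc M.card ≤ mim (cutGraph G σ t) := (cutGraph_eq_thresholdCut σ t ▸ hM).card_le_mim
    _ ≤ mw G σ := Finset.le_sup (f := fun i => mim (cutGraph G σ i)) ht

theorem lmw_eq_zero_of_subsingleton [Subsingleton V] (G : SimpleGraph V) :
    lmw G = 0 :=
  lmw_eq_of_mw_le_of_forall_le (σ := Fintype.equivFin V)
    (Finset.sup_le fun i hi => by
      have := Fintype.card_le_one_iff_subsingleton.mpr ‹_›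
      simp only [Finset.mem_Ico] at hi
      omega)
    fun _ => Nat.zero_le _

theorem lmw_eq_of_isCutObstruction {n k : ℕ} {G : SimpleGraph (Fin n)} {r : Fin n}
    (hupper : ∀ t M, IsInducedMatching (thresholdCut G Fin.val t) M → M.card ≤ k)
    (hlower : IsCutObstruction G r k) : lmw G = k :=
  lmw_eq_of_mw_le_of_forall_le (σ := finCongr (Fintype.card_fin n).symm)
    (mw_le_of_forall_thresholdCut hupper) hlower.le_mw

end Width

section ParentGraph

variable {n : ℕ} {p : ℕ → ℕ}

def parentGraph (n : ℕ) (p : ℕ → ℕ) : SimpleGraph (Fin n) where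
  Adj x y := ((x : ℕ) < y ∧ p x = y) ∨ ((y : ℕ) < x ∧ p y = x)
  symm := ⟨fun _ _ h => h.symm⟩
  loopless := ⟨fun _ h => by omega⟩

theorem parentGraph_adj {x y : Fin n} :
    (parentGraph n p).Adj x y ↔ ((x : ℕ) < y ∧ p x = y) ∨ ((y : ℕ) < x ∧ p y = x) :=
  Iff.rfl

theorem parentGraph_reachable (hp : ∀ x, x + 1 < n → x < p x ∧ p x < n) {y : Fin n}
    (hy : (y : ℕ) + 1 = n) (x : Fin n) : (parentGraph n p).Reachable x y := by
  by_cases hx : (x : ℕ) + 1 < n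
  · have hadj : (parentGraph n p).Adj x ⟨p x, (hp x hx).2⟩ := Or.inl ⟨(hp x hx).1, rfl⟩
    exact hadj.reachable.trans (parentGraph_reachable hp hy _)
  · rw [Fin.ext (by omega : (x : ℕ) = y)]
termination_by n - x
decreasing_by exact Nat.sub_lt_sub_left (by omega) (hp x hx).1

/-- Each vertex `x < n - 1` contributes exactly the edge `{x, p x}`. -/
theorem card_edgeSet_parentGraph (hp : ∀ x, x + 1 < n → x < p x ∧ p x < n) :
    Nat.card (parentGraph n p).edgeSet = n - 1 := by
  let e : Fin (n - 1) → (parentGraph n p).edgeSet := fun i =>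
    ⟨s(⟨i, by omega⟩, ⟨p i, (hp i (by omega)).2⟩), Or.inl ⟨(hp i (by omega)).1, rfl⟩⟩
  have he : Function.Bijective e := by
    refine ⟨fun i j hij => ?_, fun ⟨a, ha⟩ => ?_⟩
    · have hi := (hp i (by omega)).1
      have hj := (hp j (by omega)).1
      rcases Sym2.eq_iff.mp (Subtype.ext_iff.mp hij) with ⟨h, -⟩ | ⟨h1, h2⟩
      · exact Fin.ext (congrArg Fin.val h :)
      · simp only [Fin.ext_iff] at h1 h2
        omega
    · induction a using Sym2.ind with
      | _ x y =>
        rw [SimpleGraph.mem_edgeSet, parentGraph_adj] at ha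
        have := x.isLt
        have := y.isLt
        rcases ha with ⟨hxy, hpx⟩ | ⟨hyx, hpy⟩
        · exact ⟨⟨x, by omega⟩, Subtype.ext (congrArg₂ (fun a b => s(a, b)) rfl (Fin.ext hpx))⟩
        · exact ⟨⟨y, by omega⟩, Subtype.ext ((congrArg₂ (fun a b => s(a, b)) rfl
            (Fin.ext hpy)).trans Sym2.eq_swap)⟩
  rw [← Nat.card_eq_of_bijective e he, Nat.card_eq_fintype_card, Fintype.card_fin]

theorem parentGraph_isTree (hn : 0 < n) (hp : ∀ x, x + 1 < n → x < p x ∧ p x < n) :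
    (parentGraph n p).IsTree := by
  have hconn : (parentGraph n p).Connected := by
    let last : Fin n := ⟨n - 1, by omega⟩
    have hlast : (last : ℕ) + 1 = n := by simp only [last]; omega
    exact (SimpleGraph.connected_iff _).mpr ⟨fun x y =>
      (parentGraph_reachable hp hlast x).trans (parentGraph_reachable hp hlast y).symm, ⟨last⟩⟩
  refine SimpleGraph.isTree_iff_connected_and_card.mpr ⟨hconn, ?_⟩
  rw [card_edgeSet_parentGraph hp, Nat.card_eq_fintype_card, Fintype.card_fin]
  omega

end ParentGraph

def size : ℕ → ℕ
  | 0 => 3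
  | k + 1 => 3 * size k + 2

theorem three_le_size : ∀ k, 3 ≤ size k
  | 0 => le_rfl
  | k + 1 => by
    have := three_le_size k
    show 3 ≤ 3 * size k + 2
    omega

def parent : ℕ → ℕ → ℕ
  | 0, x => x + 1
  | k + 1, x =>
    if x < 3 * size k then
      if x % size k + 1 = size k then 3 * size k else size k * (x / size k) + parent k (x % size k)
    else 3 * size k + 1

/-- `tree 0` is the path `0 - 1 - 2`; `tree (k + 1)` consists of three copies of `tree k` on
the blocks `[c * size k, (c + 1) * size k)`, a hub `3 * size k` joined to the three copy roots,
and the new root `3 * size k + 1` joined to the hub. The root of `tree k` is its last vertex. -/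
def tree (k : ℕ) : SimpleGraph (Fin (size k)) := parentGraph (size k) (parent k)

theorem parent_spec : ∀ k x, x + 1 < size k → x < parent k x ∧ parent k x < size k
  | 0, x, hx => by simp only [size] at hx; simp only [parent, size]; omega
  | k + 1, x, hx => by
    have hA := three_le_size k
    simp only [size] at hx
    simp only [parent, size]
    split_ifs with h₁ h₂
    · omega
    · have hq : x / size k < 3 := Nat.div_lt_of_lt_mul (by omega)
      have hr := parent_spec k (x % size k) (by have := Nat.mod_lt x (by omega : 0 < size k); omega)
      have hx' := Nat.div_add_mod x (size k)
      interval_cases hq' : x / size k <;> omega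
    · omega

def root (k : ℕ) : Fin (size k) := ⟨size k - 1, by have := three_le_size k; omega⟩

def copy {k : ℕ} (c : Fin 3) (x : Fin (size k)) : Fin (size (k + 1)) :=
  ⟨size k * c + x, by
    have := x.isLt
    have := c.isLt
    simp only [size]
    interval_cases (c : ℕ) <;> omega⟩

def hub (k : ℕ) : Fin (size (k + 1)) := ⟨3 * size k, by simp only [size]; omega⟩

section Tree

variable {k : ℕ}

@[simp] theorem root_val : (root k : ℕ) = size k - 1 := rfl
@[simp] theorem copy_val (c : Fin 3) (x : Fin (size k)) : (copy c x : ℕ) = size k * c + x := rfl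
@[simp] theorem hub_val : (hub k : ℕ) = 3 * size k := rfl

theorem root_succ_val : (root (k + 1) : ℕ) = 3 * size k + 1 := by
  simp only [root_val, size]
  omega

theorem copy_inj {c c' : Fin 3} {x y : Fin (size k)} : copy c x = copy c' y ↔ c = c' ∧ x = y := by
  have hx := x.isLt
  have hy := y.isLt
  simp only [Fin.ext_iff, copy_val]
  fin_cases c <;> fin_cases c' <;> simp <;> omega

theorem copy_injective (c : Fin 3) : Function.Injective (copy (k := k) c) :=
  fun _ _ h => (copy_inj.mp h).2

theorem copy_ne_hub (c : Fin 3) (x : Fin (size k)) : copy c x ≠ hub k := by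
  have hx := x.isLt
  simp only [ne_eq, Fin.ext_iff, copy_val, hub_val]
  fin_cases c <;> simp <;> omega

theorem copy_ne_root (c : Fin 3) (x : Fin (size k)) : copy c x ≠ root (k + 1) := by
  have hx := x.isLt
  simp only [ne_eq, Fin.ext_iff, copy_val, root_succ_val]
  fin_cases c <;> simp <;> omega

theorem hub_ne_root : hub k ≠ root (k + 1) :=
  Fin.ne_of_val_ne (by rw [hub_val, root_succ_val]; omega)

theorem vertex_cases (z : Fin (size (k + 1))) :
    (∃ c x, z = copy c x) ∨ z = hub k ∨ z = root (k + 1) := by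
  have hz := z.isLt
  have hA := three_le_size k
  simp only [size] at hz
  by_cases h : (z : ℕ) < 3 * size k
  · left
    refine ⟨⟨z / size k, Nat.div_lt_of_lt_mul (by omega)⟩, ⟨z % size k, Nat.mod_lt _ (by omega)⟩,
      Fin.ext (Nat.div_add_mod z (size k)).symm⟩
  · right
    by_cases h' : (z : ℕ) = 3 * size k
    · exact Or.inl (Fin.ext h')
    · exact Or.inr (Fin.ext (by rw [root_succ_val]; omega))

theorem exists_vertex_iff {P : Fin (size (k + 1)) → Prop} :
    (∃ z, P z) ↔ (∃ c x, P (copy c x)) ∨ P (hub k) ∨ P (root (k + 1)) := by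
  refine ⟨fun ⟨z, hz⟩ => ?_, ?_⟩
  · rcases vertex_cases z with ⟨c, x, rfl⟩ | rfl | rfl
    exacts [Or.inl ⟨c, x, hz⟩, Or.inr (Or.inl hz), Or.inr (Or.inr hz)]
  · rintro (⟨c, x, h⟩ | h | h) <;> exact ⟨_, h⟩

theorem parent_copy (c : Fin 3) (x : Fin (size k)) :
    parent (k + 1) (size k * c + x) =
      if (x : ℕ) + 1 = size k then 3 * size k else size k * c + parent k x := by
  have hx := x.isLt
  have hc := c.isLt
  have hlt : size k * c + x < 3 * size k := by interval_cases (c : ℕ) <;> omega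
  simp only [parent, hlt, if_true, Nat.mul_add_mod, Nat.mod_eq_of_lt hx,
    Nat.mul_add_div (by omega : 0 < size k), Nat.div_eq_of_lt hx, add_zero]

theorem parent_hub : parent (k + 1) (3 * size k) = 3 * size k + 1 := by
  simp [parent]

theorem isTree_tree (k : ℕ) : (tree k).IsTree :=
  parentGraph_isTree (by have := three_le_size k; omega) (parent_spec k)

theorem tree_zero_adj : (tree 0).Adj ⟨0, by decide⟩ ⟨1, by decide⟩ :=
  Or.inl ⟨by decide, rfl⟩

theorem tree_adj_copy_copy {c c' : Fin 3} {x y : Fin (size k)} :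
    (tree (k + 1)).Adj (copy c x) (copy c' y) ↔ c = c' ∧ (tree k).Adj x y := by
  have hx := x.isLt
  have hy := y.isLt
  have hpx := parent_spec k x
  have hpy := parent_spec k y
  simp only [tree, parentGraph_adj, copy_val, parent_copy]
  fin_cases c <;> fin_cases c' <;> simp <;> split_ifs <;> omega

theorem tree_adj_copy_hub {c : Fin 3} {x : Fin (size k)} :
    (tree (k + 1)).Adj (copy c x) (hub k) ↔ x = root k := by
  have hx := x.isLt
  have hpx := parent_spec k x
  simp only [tree, parentGraph_adj, copy_val, hub_val, parent_copy, parent_hub, Fin.ext_iff,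
    root_val]
  fin_cases c <;> simp <;> omega

theorem tree_adj_hub_copy {c : Fin 3} {x : Fin (size k)} :
    (tree (k + 1)).Adj (hub k) (copy c x) ↔ x = root k := by
  rw [SimpleGraph.adj_comm, tree_adj_copy_hub]

theorem tree_not_adj_copy_root {c : Fin 3} {x : Fin (size k)} :
    ¬ (tree (k + 1)).Adj (copy c x) (root (k + 1)) := by
  have hx := x.isLt
  have hpx := parent_spec k x
  simp only [tree, parentGraph_adj, copy_val, root_succ_val, parent_copy]
  fin_cases c <;> simp <;> split_ifs <;> omega

theorem tree_not_adj_root_copy {c : Fin 3} {x : Fin (size k)} :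
    ¬ (tree (k + 1)).Adj (root (k + 1)) (copy c x) :=
  fun h => tree_not_adj_copy_root h.symm

theorem tree_adj_hub_root : (tree (k + 1)).Adj (hub k) (root (k + 1)) :=
  Or.inl ⟨by rw [hub_val, root_succ_val]; omega, by rw [hub_val, root_succ_val, parent_hub]⟩

theorem tree_not_adj_copy_copy_of_ne {c c' : Fin 3} (hc : c ≠ c') (x y : Fin (size k)) :
    ¬ (tree (k + 1)).Adj (copy c x) (copy c' y) :=
  fun h => hc (tree_adj_copy_copy.mp h).1

theorem tree_sq_adj_copy_copy {c c' : Fin 3} {x y : Fin (size k)} :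
    (graphPow (tree (k + 1)) 2).Adj (copy c x) (copy c' y) ↔
      (c = c' ∧ (graphPow (tree k) 2).Adj x y) ∨ (c ≠ c' ∧ x = root k ∧ y = root k) := by
  simp only [graphPow_two_adj, exists_vertex_iff, tree_adj_copy_copy, tree_adj_copy_hub,
    tree_adj_hub_copy, tree_not_adj_copy_root, tree_not_adj_root_copy, ne_eq, copy_inj, and_false,
    or_false]
  by_cases hc : c = c'
  · subst hc
    simp only [true_and, not_true_eq_false, false_and, or_false]
    refine and_congr_right fun hxy => or_congr_right ⟨?_, fun ⟨z, h₁, h₂⟩ => ?_⟩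
    · rintro (⟨_, z, ⟨rfl, h₁⟩, -, h₂⟩ | ⟨rfl, rfl⟩)
      exacts [⟨z, h₁, h₂⟩, absurd rfl hxy]
    · exact Or.inl ⟨c, z, ⟨rfl, h₁⟩, rfl, h₂⟩
  · simp [hc]

theorem tree_sq_cross {c c' : Fin 3} {x y : Fin (size k)} (hc : c ≠ c')
    (h : (graphPow (tree (k + 1)) 2).Adj (copy c x) (copy c' y)) : x = root k ∧ y = root k := by
  rcases tree_sq_adj_copy_copy.mp h with ⟨h', -⟩ | ⟨-, hx, hy⟩
  exacts [absurd h' hc, ⟨hx, hy⟩]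

theorem tree_sq_adj_copy_root {c : Fin 3} {x : Fin (size k)} :
    (graphPow (tree (k + 1)) 2).Adj (copy c x) (root (k + 1)) ↔ x = root k := by
  refine ⟨fun h => ?_, ?_⟩
  · obtain ⟨-, h | ⟨z, h₁, h₂⟩⟩ := graphPow_two_adj.mp h
    · exact absurd h tree_not_adj_copy_root
    rcases vertex_cases z with ⟨c', y, rfl⟩ | rfl | rfl
    · exact absurd h₂ tree_not_adj_copy_root
    · exact tree_adj_copy_hub.mp h₁
    · exact absurd h₁ tree_not_adj_copy_root
  · rintro rfl
    exact graphPow_two_adj.mpr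
      ⟨copy_ne_root _ _, Or.inr ⟨hub k, tree_adj_copy_hub.mpr rfl, tree_adj_hub_root⟩⟩

def IsTopVertex (v : Fin (size (k + 1))) : Prop :=
  v = root (k + 1) ∨ ∃ c, v = copy c (root k)

theorem tree_sq_adj_hub {v : Fin (size (k + 1))} (hv : IsTopVertex v) :
    (graphPow (tree (k + 1)) 2).Adj (hub k) v := by
  rcases hv with rfl | ⟨c, rfl⟩
  exacts [le_graphPow_two _ tree_adj_hub_root, le_graphPow_two _ (tree_adj_hub_copy.mpr rfl)]

theorem tree_sq_adj_of_isTopVertex {u v : Fin (size (k + 1))} (hu : IsTopVertex u)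
    (hv : IsTopVertex v) (hne : u ≠ v) : (graphPow (tree (k + 1)) 2).Adj u v := by
  rcases hu with rfl | ⟨c, rfl⟩ <;> rcases hv with rfl | ⟨c', rfl⟩
  · exact absurd rfl hne
  · exact (tree_sq_adj_copy_root.mpr rfl).symm
  · exact tree_sq_adj_copy_root.mpr rfl
  · exact tree_sq_adj_copy_copy.mpr (Or.inr ⟨fun h => hne (h ▸ rfl), rfl, rfl⟩)

end Tree

/-- If not, by pigeonhole two cuts `t i` and `t i'` send all other branches to the same side, and
then `B i` and `B i'` cannot both reach across their own cut. -/
theorem exists_cut_between_other_branches {ι V : Type*} [Fintype ι] (hι : 2 < Fintype.card ι)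
    (B : ι → Set V) (f : V → ℕ) (t : ι → ℕ) (hlo : ∀ i, ∃ x ∈ B i, f x < t i)
    (hhi : ∀ i, ∃ x ∈ B i, t i ≤ f x) :
    ∃ i j j', j ≠ i ∧ j' ≠ i ∧ (∃ x ∈ B j, f x < t i) ∧ ∃ y ∈ B j', t i ≤ f y := by
  by_contra! h
  obtain ⟨i, i', hii', hside⟩ := Fintype.exists_ne_map_eq_of_card_lt
    (fun i => decide (∃ j ≠ i, ∃ x ∈ B j, f x < t i)) (by simpa using hι)
  by_cases hb : ∃ j ≠ i, ∃ x ∈ B j, f x < t i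
  · have hb' : ∃ j ≠ i', ∃ x ∈ B j, f x < t i' := by simpa [hb] using hside.symm
    obtain ⟨j, hj, x, hx, hxt⟩ := hb
    obtain ⟨j', hj', x', hx', hxt'⟩ := hb'
    obtain ⟨y, hy, hyt⟩ := hhi i
    obtain ⟨y', hy', hyt'⟩ := hhi i'
    have := h i j i' hj hii'.symm ⟨x, hx, hxt⟩ y' hy'
    have := h i' j' i hj' hii' ⟨x', hx', hxt'⟩ y hy
    omega
  · have hb' : ¬ ∃ j ≠ i', ∃ x ∈ B j, f x < t i' := by simpa [hb] using hside.symm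
    push Not at hb hb'
    obtain ⟨y, hy, hyt⟩ := hlo i
    obtain ⟨y', hy', hyt'⟩ := hlo i'
    have := hb i' hii'.symm y' hy'
    have := hb' i hii' y hy
    omega

section LowerBound

variable {k : ℕ} {Hs : SimpleGraph (Fin (size k))} {H : SimpleGraph (Fin (size (k + 1)))}

/-- `v` can be matched alongside any induced matching on the non-root vertices of copy `c`. -/
def IsFarFromCopy (H : SimpleGraph (Fin (size (k + 1)))) (c : Fin 3) (v : Fin (size (k + 1))) :
    Prop :=
  v ≠ root (k + 1) ∧ ∀ x ≠ root k, v ≠ copy c x ∧ ¬ H.Adj v (copy c x)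

theorem isFarFromCopy_copy
    (hcross : ∀ c c' x y, c ≠ c' → H.Adj (copy c x) (copy c' y) → x = root k)
    {c c' : Fin 3} (hc : c' ≠ c) (u : Fin (size k)) : IsFarFromCopy H c (copy c' u) :=
  ⟨copy_ne_root c' u, fun x hx =>
    ⟨fun h => hc (copy_inj.mp h).1, fun h => hx (hcross c c' x u hc.symm h.symm)⟩⟩

theorem exists_far_edge_of_split_copy (hconn : Hs.Connected)
    (hcopy : ∀ c x y, H.Adj (copy c x) (copy c y) ↔ Hs.Adj x y)
    (hcross : ∀ c c' x y, c ≠ c' → H.Adj (copy c x) (copy c' y) → x = root k)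
    {f : Fin (size (k + 1)) → ℕ} {t : ℕ} {c c' : Fin 3} (hc : c' ≠ c) {x y : Fin (size k)}
    (hx : f (copy c' x) < t) (hy : t ≤ f (copy c' y)) :
    ∃ a b, (thresholdCut H f t).Adj a b ∧ IsFarFromCopy H c a ∧ IsFarFromCopy H c b := by
  obtain ⟨a, b, hab, hcut⟩ :=
    exists_thresholdCut_adj_of_walk (f := f ∘ copy c') (hconn.preconnected x y).some hx hy
  exact ⟨copy c' a, copy c' b, ⟨(hcopy c' a b).mpr hab, hcut⟩,
    isFarFromCopy_copy hcross hc a, isFarFromCopy_copy hcross hc b⟩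

theorem exists_far_edge (hconn : Hs.Connected)
    (hcopy : ∀ c x y, H.Adj (copy c x) (copy c y) ↔ Hs.Adj x y)
    (hcross : ∀ c c' x y, c ≠ c' → H.Adj (copy c x) (copy c' y) → x = root k)
    (hbridge : ∀ (f : Fin (size (k + 1)) → ℕ) (t : ℕ) (c c' c'' : Fin 3), c' ≠ c → c'' ≠ c →
      c' ≠ c'' → f (copy c' (root k)) < t → t ≤ f (copy c'' (root k)) →
      ∃ a b, (thresholdCut H f t).Adj a b ∧ IsFarFromCopy H c a ∧ IsFarFromCopy H c b)
    {f : Fin (size (k + 1)) → ℕ} {t : ℕ} {c c' c'' : Fin 3} (hc' : c' ≠ c) (hc'' : c'' ≠ c)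
    {x y : Fin (size k)} (hx : f (copy c' x) < t) (hy : t ≤ f (copy c'' y)) :
    ∃ a b, (thresholdCut H f t).Adj a b ∧ IsFarFromCopy H c a ∧ IsFarFromCopy H c b := by
  by_cases h₁ : t ≤ f (copy c' (root k))
  · exact exists_far_edge_of_split_copy hconn hcopy hcross hc' hx h₁
  by_cases h₂ : f (copy c'' (root k)) < t
  · exact exists_far_edge_of_split_copy hconn hcopy hcross hc'' h₂ hy
  have hne : c' ≠ c'' := by
    rintro rfl
    omega
  exact hbridge f t c c' c'' hc' hc'' hne (not_le.mp h₁) (not_lt.mp h₂)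

theorem exists_copy_cut_matching (hcopy : ∀ c x y, H.Adj (copy c x) (copy c y) ↔ Hs.Adj x y)
    (ih : IsCutObstruction Hs (root k) (k + 1)) {f : Fin (size (k + 1)) → ℕ}
    (hf : Function.Injective f) (c : Fin 3) :
    ∃ t M, IsInducedMatching (thresholdCut H f t) M ∧ M.card = k + 1 ∧
      (∀ e ∈ M, ∀ v ∈ e, ∃ x ≠ root k, v = copy c x) ∧
      (∃ x, f (copy c x) < t) ∧ ∃ y, t ≤ f (copy c y) := by
  let φ : Hs ↪g H := ⟨⟨copy c, copy_injective c⟩, hcopy c _ _⟩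
  obtain ⟨t, M, hM, hcard, hroot⟩ := ih (f ∘ φ) (hf.comp φ.injective)
  obtain ⟨e, he⟩ : M.Nonempty := Finset.card_pos.mp (by omega)
  obtain ⟨a, b, -, -, ha, hb⟩ := exists_eq_mk_of_mem_edgeSet_thresholdCut (hM.1 he)
  refine ⟨t, M.image (Sym2.map φ), hM.image (thresholdCutEmbedding φ f), ?_, ?_, ⟨a, ha⟩, b, hb⟩
  · rw [Finset.card_image_of_injective _ (Sym2.map.injective φ.injective), hcard]
  · intro e he v hv
    obtain ⟨e, heM, rfl⟩ := Finset.mem_image.mp he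
    obtain ⟨x, hx, rfl⟩ := Sym2.mem_map.mp hv
    exact ⟨x, fun h => hroot e heM (h ▸ hx), rfl⟩

theorem exists_insert_far_edge {f : Fin (size (k + 1)) → ℕ} {t : ℕ} {c : Fin 3}
    {M : Finset (Sym2 (Fin (size (k + 1))))} (hM : IsInducedMatching (thresholdCut H f t) M)
    (hmem : ∀ e ∈ M, ∀ v ∈ e, ∃ x ≠ root k, v = copy c x) {a b : Fin (size (k + 1))}
    (hab : (thresholdCut H f t).Adj a b) (ha : IsFarFromCopy H c a) (hb : IsFarFromCopy H c b) :
    ∃ M', IsInducedMatching (thresholdCut H f t) M' ∧ M'.card = M.card + 1 ∧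
      ∀ e ∈ M', root (k + 1) ∉ e := by
  have hfar : ∀ e ∈ M, ∀ u ∈ e, u ≠ a ∧ u ≠ b ∧
      ¬ (thresholdCut H f t).Adj a u ∧ ¬ (thresholdCut H f t).Adj b u := by
    intro e he u hu
    obtain ⟨x, hx, rfl⟩ := hmem e he u hu
    exact ⟨(ha.2 x hx).1.symm, (hb.2 x hx).1.symm, fun h => (ha.2 x hx).2 h.1,
      fun h => (hb.2 x hx).2 h.1⟩
  have hnew : s(a, b) ∉ M := fun h => (hfar _ h a (Sym2.mem_mk_left a b)).1 rfl
  refine ⟨insert s(a, b) M, hM.insert hab hfar, Finset.card_insert_of_notMem hnew, ?_⟩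
  intro e he hr
  rcases Finset.mem_insert.mp he with rfl | he
  · rcases Sym2.mem_iff.mp hr with h | h
    exacts [ha.1 h.symm, hb.1 h.symm]
  · obtain ⟨x, -, hx⟩ := hmem e he _ hr
    exact copy_ne_root c x hx.symm

/-- The three-branch argument behind lower bounds for the path-width of trees, run on cuts. -/
theorem isCutObstruction_succ (hconn : Hs.Connected)
    (hcopy : ∀ c x y, H.Adj (copy c x) (copy c y) ↔ Hs.Adj x y)
    (hcross : ∀ c c' x y, c ≠ c' → H.Adj (copy c x) (copy c' y) → x = root k)
    (hbridge : ∀ (f : Fin (size (k + 1)) → ℕ) (t : ℕ) (c c' c'' : Fin 3), c' ≠ c → c'' ≠ c →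
      c' ≠ c'' → f (copy c' (root k)) < t → t ≤ f (copy c'' (root k)) →
      ∃ a b, (thresholdCut H f t).Adj a b ∧ IsFarFromCopy H c a ∧ IsFarFromCopy H c b)
    (ih : IsCutObstruction Hs (root k) (k + 1)) : IsCutObstruction H (root (k + 1)) (k + 2) := by
  intro f hf
  choose t M hM hcard hmem hlo hhi using exists_copy_cut_matching hcopy ih hf
  obtain ⟨c, c', c'', hc', hc'', ⟨_, ⟨x, rfl⟩, hx⟩, _, ⟨y, rfl⟩, hy⟩ :=
    exists_cut_between_other_branches (by simp) (fun c => Set.range (copy c)) f t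
      (fun c => have ⟨x, hx⟩ := hlo c; ⟨_, ⟨x, rfl⟩, hx⟩)
      (fun c => have ⟨y, hy⟩ := hhi c; ⟨_, ⟨y, rfl⟩, hy⟩)
  obtain ⟨a, b, hab, ha, hb⟩ := exists_far_edge hconn hcopy hcross hbridge hc' hc'' hx hy
  obtain ⟨M', hM', hcard', hroot⟩ := exists_insert_far_edge (hM c) (hmem c) hab ha hb
  exact ⟨t c, M', hM', by rw [hcard', hcard c], hroot⟩

theorem isFarFromCopy_hub (c : Fin 3) : IsFarFromCopy (tree (k + 1)) c (hub k) :=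
  ⟨hub_ne_root, fun x hx => ⟨(copy_ne_hub c x).symm, fun h => hx (tree_adj_hub_copy.mp h)⟩⟩

/-- The hub lies on one side of the cut, and is joined to the root of the copy on the other. -/
theorem tree_exists_far_edge {f : Fin (size (k + 1)) → ℕ} {t : ℕ} {c c' c'' : Fin 3} (hc' : c' ≠ c)
    (hc'' : c'' ≠ c) (h' : f (copy c' (root k)) < t) (h'' : t ≤ f (copy c'' (root k))) :
    ∃ a b, (thresholdCut (tree (k + 1)) f t).Adj a b ∧
      IsFarFromCopy (tree (k + 1)) c a ∧ IsFarFromCopy (tree (k + 1)) c b := by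
  have hcross : ∀ c c' x y, c ≠ c' → (tree (k + 1)).Adj (copy c x) (copy c' y) → x = root k :=
    fun _ _ x y hc h => absurd h (tree_not_adj_copy_copy_of_ne hc x y)
  by_cases hhub : f (hub k) < t
  · exact ⟨hub k, copy c'' (root k), ⟨tree_adj_hub_copy.mpr rfl, Or.inl ⟨hhub, h''⟩⟩,
      isFarFromCopy_hub c, isFarFromCopy_copy hcross hc'' _⟩
  · exact ⟨copy c' (root k), hub k, ⟨tree_adj_copy_hub.mpr rfl, Or.inl ⟨h', not_lt.mp hhub⟩⟩,
      isFarFromCopy_copy hcross hc' _, isFarFromCopy_hub c⟩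

/-- The witnesses are the roots of the copies `c'` and `c''`, adjacent in the square. -/
theorem tree_sq_exists_far_edge {f : Fin (size (k + 1)) → ℕ} {t : ℕ} {c c' c'' : Fin 3}
    (hc' : c' ≠ c) (hc'' : c'' ≠ c) (hne : c' ≠ c'') (h' : f (copy c' (root k)) < t)
    (h'' : t ≤ f (copy c'' (root k))) :
    ∃ a b, (thresholdCut (graphPow (tree (k + 1)) 2) f t).Adj a b ∧
      IsFarFromCopy (graphPow (tree (k + 1)) 2) c a ∧
      IsFarFromCopy (graphPow (tree (k + 1)) 2) c b := by
  have hcross : ∀ c c' x y, c ≠ c' → (graphPow (tree (k + 1)) 2).Adj (copy c x) (copy c' y) →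
      x = root k := fun _ _ _ _ hc h => (tree_sq_cross hc h).1
  exact ⟨copy c' (root k), copy c'' (root k),
    ⟨tree_sq_adj_copy_copy.mpr (Or.inr ⟨hne, rfl, rfl⟩), Or.inl ⟨h', h''⟩⟩,
    isFarFromCopy_copy hcross hc' _, isFarFromCopy_copy hcross hc'' _⟩

theorem isCutObstruction_tree : ∀ k, IsCutObstruction (tree k) (root k) (k + 1)
  | 0 => isCutObstruction_of_adj tree_zero_adj (by decide) (by decide)
  | k + 1 => isCutObstruction_succ (isTree_tree k).connected
      (fun _ _ _ => tree_adj_copy_copy.trans (and_iff_right rfl))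
      (fun _ _ x y hc h => absurd h (tree_not_adj_copy_copy_of_ne hc x y))
      (fun _ _ _ _ _ hc' hc'' _ h' h'' => tree_exists_far_edge hc' hc'' h' h'')
      (isCutObstruction_tree k)

theorem isCutObstruction_tree_sq : ∀ k, IsCutObstruction (graphPow (tree k) 2) (root k) (k + 1)
  | 0 => isCutObstruction_of_adj (le_graphPow_two _ tree_zero_adj) (by decide) (by decide)
  | k + 1 => isCutObstruction_succ ((isTree_tree k).connected.mono (le_graphPow_two _))
      (fun _ _ _ => tree_sq_adj_copy_copy.trans (by simp))
      (fun _ _ _ _ hc h => (tree_sq_cross hc h).1)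
      (fun _ _ _ _ _ hc' hc'' hne h' h'' => tree_sq_exists_far_edge hc' hc'' hne h' h'')
      (isCutObstruction_tree_sq k)

end LowerBound

section UpperBound

variable {k : ℕ} {Hs : SimpleGraph (Fin (size k))} {H : SimpleGraph (Fin (size (k + 1)))}

def IsInternalEdge (e : Sym2 (Fin (size (k + 1)))) : Prop :=
  ∃ c x y, e = s(copy c x, copy c y)

/-- Under the identity layout each copy occupies an interval, so a cut crosses at most one. -/
theorem eq_of_thresholdCut_adj_copy {t : ℕ} {c c' : Fin 3} {x y x' y' : Fin (size k)}
    (h : (thresholdCut H Fin.val t).Adj (copy c x) (copy c y))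
    (h' : (thresholdCut H Fin.val t).Adj (copy c' x') (copy c' y')) : c = c' := by
  have := x.isLt
  have := y.isLt
  have := x'.isLt
  have := y'.isLt
  replace h := h.2
  replace h' := h'.2
  simp only [copy_val] at h h'
  fin_cases c <;> fin_cases c' <;> simp at h h' ⊢ <;> omega

theorem thresholdCut_adj_copy_iff {c : Fin 3}
    (hcopy : ∀ x y, H.Adj (copy c x) (copy c y) ↔ Hs.Adj x y)
    {t : ℕ} {x y : Fin (size k)} :
    (thresholdCut H Fin.val t).Adj (copy c x) (copy c y) ↔
      (thresholdCut Hs Fin.val (t - size k * c)).Adj x y := by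
  simp only [thresholdCut_adj, hcopy, copy_val]
  exact and_congr_right fun _ => by omega

theorem card_filter_isInternalEdge_le
    (hcopy : ∀ c x y, H.Adj (copy c x) (copy c y) ↔ Hs.Adj x y) {m : ℕ}
    (ih : ∀ t M, IsInducedMatching (thresholdCut Hs Fin.val t) M → M.card ≤ m)
    {t : ℕ} {M : Finset (Sym2 (Fin (size (k + 1))))}
    (hM : IsInducedMatching (thresholdCut H Fin.val t) M) :
    (M.filter IsInternalEdge).card ≤ m := by
  obtain hempty | ⟨e₀, he₀⟩ := (M.filter IsInternalEdge).eq_empty_or_nonempty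
  · simp [hempty]
  obtain ⟨he₀M, c, x₀, y₀, rfl⟩ := Finset.mem_filter.mp he₀
  let φ : thresholdCut Hs Fin.val (t - size k * c) ↪g thresholdCut H Fin.val t :=
    ⟨⟨copy c, copy_injective c⟩, thresholdCut_adj_copy_iff (hcopy c)⟩
  have hrange : ∀ e ∈ M.filter IsInternalEdge, ∀ v ∈ e, v ∈ Set.range φ := by
    intro e he v hv
    obtain ⟨heM, c', x, y, rfl⟩ := Finset.mem_filter.mp he
    obtain rfl := eq_of_thresholdCut_adj_copy (hM.1 he₀M) (hM.1 heM)
    rcases Sym2.mem_iff.mp hv with rfl | rfl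
    exacts [⟨x, rfl⟩, ⟨y, rfl⟩]
  rw [← card_preimage_sym2Map φ.toEmbedding hrange]
  exact ih _ _ ((hM.subset (Finset.filter_subset _ _)).preimage φ)

theorem hub_mem_of_not_isInternalEdge {e : Sym2 (Fin (size (k + 1)))}
    (he : e ∈ (tree (k + 1)).edgeSet) (hint : ¬ IsInternalEdge e) : hub k ∈ e := by
  induction e using Sym2.ind with
  | _ a b =>
    rcases vertex_cases a with ⟨c, x, rfl⟩ | rfl | rfl <;>
      rcases vertex_cases b with ⟨c', y, rfl⟩ | rfl | rfl
    · obtain ⟨rfl, -⟩ := tree_adj_copy_copy.mp he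
      exact absurd ⟨c, x, y, rfl⟩ hint
    · exact Sym2.mem_mk_right _ _
    · exact absurd he tree_not_adj_copy_root
    · exact Sym2.mem_mk_left _ _
    · exact Sym2.mem_mk_left _ _
    · exact Sym2.mem_mk_left _ _
    · exact absurd he tree_not_adj_root_copy
    · exact Sym2.mem_mk_right _ _
    · exact absurd ((SimpleGraph.mem_edgeSet _).mp he) (SimpleGraph.irrefl _)

theorem tree_card_filter_not_isInternalEdge_le {f : Fin (size (k + 1)) → ℕ} {t : ℕ}
    {M : Finset (Sym2 (Fin (size (k + 1))))}
    (hM : IsInducedMatching (thresholdCut (tree (k + 1)) f t) M) :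
    (M.filter fun e => ¬ IsInternalEdge e).card ≤ 1 := by
  have hhub : ∀ e ∈ M.filter fun e => ¬ IsInternalEdge e, e ∈ M ∧ hub k ∈ e := by
    intro e he
    obtain ⟨heM, hint⟩ := Finset.mem_filter.mp he
    exact ⟨heM, hub_mem_of_not_isInternalEdge
      (SimpleGraph.edgeSet_mono thresholdCut_le (hM.1 heM)) hint⟩
  refine Finset.card_le_one.mpr fun e he e' he' => ?_
  exact hM.eq_of_mem_of_mem (hhub e he).1 (hhub e' he').1 (hhub e he).2 (hhub e' he').2

theorem hub_mem_or_isTopVertex_of_not_isInternalEdge {e : Sym2 (Fin (size (k + 1)))}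
    (he : e ∈ (graphPow (tree (k + 1)) 2).edgeSet) (hint : ¬ IsInternalEdge e) :
    hub k ∈ e ∨ ∀ v ∈ e, IsTopVertex v := by
  induction e using Sym2.ind with
  | _ a b =>
    have htop : IsTopVertex a → IsTopVertex b → ∀ v ∈ s(a, b), IsTopVertex v := by
      intro ha hb v hv
      rcases Sym2.mem_iff.mp hv with rfl | rfl
      exacts [ha, hb]
    rcases vertex_cases a with ⟨c, x, rfl⟩ | rfl | rfl <;>
      rcases vertex_cases b with ⟨c', y, rfl⟩ | rfl | rfl
    · rcases tree_sq_adj_copy_copy.mp he with ⟨rfl, -⟩ | ⟨-, rfl, rfl⟩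
      · exact absurd ⟨c, x, y, rfl⟩ hint
      · exact Or.inr (htop (Or.inr ⟨c, rfl⟩) (Or.inr ⟨c', rfl⟩))
    · exact Or.inl (Sym2.mem_mk_right _ _)
    · obtain rfl := tree_sq_adj_copy_root.mp he
      exact Or.inr (htop (Or.inr ⟨c, rfl⟩) (Or.inl rfl))
    · exact Or.inl (Sym2.mem_mk_left _ _)
    · exact Or.inl (Sym2.mem_mk_left _ _)
    · exact Or.inl (Sym2.mem_mk_left _ _)
    · obtain rfl := tree_sq_adj_copy_root.mp he.symm
      exact Or.inr (htop (Or.inl rfl) (Or.inr ⟨c', rfl⟩))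
    · exact Or.inl (Sym2.mem_mk_right _ _)
    · exact absurd ((SimpleGraph.mem_edgeSet _).mp he) (SimpleGraph.irrefl _)

theorem tree_sq_card_filter_not_isInternalEdge_le {f : Fin (size (k + 1)) → ℕ} {t : ℕ}
    {M : Finset (Sym2 (Fin (size (k + 1))))}
    (hM : IsInducedMatching (thresholdCut (graphPow (tree (k + 1)) 2) f t) M) :
    (M.filter fun e => ¬ IsInternalEdge e).card ≤ 1 := by
  have hclass : ∀ e ∈ M.filter fun e => ¬ IsInternalEdge e,
      e ∈ M ∧ (hub k ∈ e ∨ ∀ v ∈ e, IsTopVertex v) := by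
    intro e he
    obtain ⟨heM, hint⟩ := Finset.mem_filter.mp he
    exact ⟨heM, hub_mem_or_isTopVertex_of_not_isInternalEdge
      (SimpleGraph.edgeSet_mono thresholdCut_le (hM.1 heM)) hint⟩
  have key : ∀ e ∈ M, ∀ e' ∈ M, ∀ v ∈ e, IsTopVertex v → (∀ u ∈ e', IsTopVertex u) → e = e' := by
    intro e he e' he' v hv hvtop htop'
    by_cases hve' : v ∈ e'
    · exact hM.eq_of_mem_of_mem he he' hv hve'
    · exact hM.eq_of_forall_adj he he' hv fun u hu =>
        tree_sq_adj_of_isTopVertex hvtop (htop' u hu) fun h => hve' (h ▸ hu)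
  refine Finset.card_le_one.mpr fun e he e' he' => ?_
  obtain ⟨heM, hhub | htop⟩ := hclass e he <;> obtain ⟨he'M, hhub' | htop'⟩ := hclass e' he'
  · exact hM.eq_of_mem_of_mem heM he'M hhub hhub'
  · exact hM.eq_of_forall_adj heM he'M hhub fun u hu => tree_sq_adj_hub (htop' u hu)
  · exact (hM.eq_of_forall_adj he'M heM hhub' fun u hu => tree_sq_adj_hub (htop u hu)).symm
  · exact key e heM e' he'M _ e.out_fst_mem (htop _ e.out_fst_mem) htop'

theorem card_le_one_of_isInducedMatching_size_zero {H : SimpleGraph (Fin (size 0))}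
    {M : Finset (Sym2 (Fin (size 0)))} (hM : IsInducedMatching H M) : M.card ≤ 1 := by
  have := hM.two_mul_card_le
  rw [Fintype.card_fin] at this
  exact Nat.le_of_lt_succ (Nat.lt_of_mul_lt_mul_left (this.trans_lt (by decide : size 0 < 2 * 2)))

theorem tree_cut_card_le :
    ∀ k t M, IsInducedMatching (thresholdCut (tree k) Fin.val t) M → M.card ≤ k + 1
  | 0, _, _, hM => card_le_one_of_isInducedMatching_size_zero hM
  | k + 1, _, _, hM => card_le_of_filter_le IsInternalEdge
      (card_filter_isInternalEdge_le (fun _ _ _ => tree_adj_copy_copy.trans (and_iff_right rfl))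
        (tree_cut_card_le k) hM)
      (tree_card_filter_not_isInternalEdge_le hM)

theorem tree_sq_cut_card_le :
    ∀ k t M, IsInducedMatching (thresholdCut (graphPow (tree k) 2) Fin.val t) M → M.card ≤ k + 1
  | 0, _, _, hM => card_le_one_of_isInducedMatching_size_zero hM
  | k + 1, _, _, hM => card_le_of_filter_le IsInternalEdge
      (card_filter_isInternalEdge_le (fun _ _ _ => tree_sq_adj_copy_copy.trans (by simp))
        (tree_sq_cut_card_le k) hM)
      (tree_sq_card_filter_not_isInternalEdge_le hM)

end UpperBound

/-- For every `k ≥ 0` there exists a tree `T` with `lmw T = k` and `lmw (T²) = k`: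
the lower bound `lmw (T²) ≥ lmw T` is tight for every `k`. -/
theorem exists_tree_lmw_square_eq (k : ℕ) :
    ∃ (n : ℕ) (T : SimpleGraph (Fin n)), T.IsTree ∧ lmw T = k ∧ lmw (graphPow T 2) = k := by
  cases k with
  | zero => exact ⟨1, ⊥, .of_subsingleton, lmw_eq_zero_of_subsingleton _,
      lmw_eq_zero_of_subsingleton _⟩
  | succ k => exact ⟨size k, tree k, isTree_tree k,
      lmw_eq_of_isCutObstruction (tree_cut_card_le k) (isCutObstruction_tree k),
      lmw_eq_of_isCutObstruction (tree_sq_cut_card_le k) (isCutObstruction_tree_sq k)⟩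

end LMW
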